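/- arXiv:1510.06683 — 5 statements merged into one kernel-verified Lean document; each statement's English description precedes it below -/
import Mathlib

section
/- For every 2×2 complex unitary matrix U and every 2×2 density matrix ρ, the l1-coherence gain satisfies C_{l1}(UρU†) − C_{l1}(ρ) ≤ max( C_{l1}(U E₀₀ U†), C_{l1}(U E₁₁ U†) ), where E₀₀ and E₁₁ are the standard basis projectors. In other words, the coherence power of a qubit unitary with respect to the l1-coherence is achieved on pure incoherent states. -/
open Matrix
open scoped ComplexOrder
/-- The `l1`-coherence of a matrix: the sum of the absolute values of its
off-diagonal entries. -/
noncomputable def l1Coherence {n : ℕ} (A : Matrix (Fin n) (Fin n) ℂ) : ℝ :=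
  ∑ i, ∑ j, if i ≠ j then ‖A i j‖ else 0

/-!
Writing `U = [[a, b], [c, d]]`, orthogonality of the rows of `U` turns the off-diagonal
entries of `U ρ Uᴴ` into `(ρ₀₀ - ρ₁₁) a c̄ + ρ₀₁ a d̄ + ρ₁₀ b c̄` and its mirror image, so
`C(U ρ Uᴴ) ≤ |ρ₀₀ - ρ₁₁| · 2|a||c| + (|ρ₀₁| + |ρ₁₀|)(|a||d| + |b||c|)`.
Here `2|a||c| = C(U E₀₀ Uᴴ)`, the rows being unit vectors gives `|a||d| + |b||c| ≤ 1`, and for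
a density matrix `|ρ₀₀ - ρ₁₁| ≤ ρ₀₀ + ρ₁₁ = 1`.
-/

lemma l1Coherence_fin_two (A : Matrix (Fin 2) (Fin 2) ℂ) :
    l1Coherence A = ‖A 0 1‖ + ‖A 1 0‖ := by
  simp [l1Coherence, Fin.sum_univ_two]

lemma l1Coherence_fin_two_conj_single_zero (U : Matrix (Fin 2) (Fin 2) ℂ) :
    l1Coherence (U * single 0 0 1 * Uᴴ) = 2 * (‖U 0 0‖ * ‖U 1 0‖) := by
  simp [l1Coherence_fin_two, mul_apply, Fin.sum_univ_two, single]
  ring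

namespace Matrix.unitaryGroup

variable {U : Matrix (Fin 2) (Fin 2) ℂ}

lemma fin_two_rows_orthogonal (hU : U ∈ unitaryGroup (Fin 2) ℂ) :
    U 0 0 * star (U 1 0) + U 0 1 * star (U 1 1) = 0 := by
  simpa [mul_apply, Fin.sum_univ_two] using congrFun (congrFun (mem_unitaryGroup_iff.mp hU) 0) 1

lemma fin_two_row_norm_sq (hU : U ∈ unitaryGroup (Fin 2) ℂ) (i : Fin 2) :
    ‖U i 0‖ ^ 2 + ‖U i 1‖ ^ 2 = 1 := by
  have hii := congrArg Complex.re (congrFun (congrFun (mem_unitaryGroup_iff.mp hU) i) i)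
  simp only [mul_apply, Fin.sum_univ_two, star_apply, Complex.star_def, Complex.mul_conj,
    Complex.normSq_eq_norm_sq, one_apply_eq] at hii
  exact_mod_cast hii

lemma fin_two_cross_norm_le_one (hU : U ∈ unitaryGroup (Fin 2) ℂ) :
    ‖U 0 0‖ * ‖U 1 1‖ + ‖U 0 1‖ * ‖U 1 0‖ ≤ 1 := by
  nlinarith [fin_two_row_norm_sq hU 0, fin_two_row_norm_sq hU 1,
    sq_nonneg (‖U 0 0‖ - ‖U 1 1‖), sq_nonneg (‖U 0 1‖ - ‖U 1 0‖)]

lemma fin_two_conj_apply_zero_one (hU : U ∈ unitaryGroup (Fin 2) ℂ)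
    (ρ : Matrix (Fin 2) (Fin 2) ℂ) :
    (U * ρ * Uᴴ) 0 1 = (ρ 0 0 - ρ 1 1) * (U 0 0 * star (U 1 0))
      + ρ 0 1 * (U 0 0 * star (U 1 1)) + ρ 1 0 * (U 0 1 * star (U 1 0)) := by
  simp only [mul_apply, Fin.sum_univ_two, conjTranspose_apply]
  linear_combination ρ 1 1 * fin_two_rows_orthogonal hU

lemma norm_fin_two_conj_apply_zero_one_le (hU : U ∈ unitaryGroup (Fin 2) ℂ)
    (ρ : Matrix (Fin 2) (Fin 2) ℂ) :
    ‖(U * ρ * Uᴴ) 0 1‖ ≤ ‖ρ 0 0 - ρ 1 1‖ * (‖U 0 0‖ * ‖U 1 0‖)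
      + ‖ρ 0 1‖ * (‖U 0 0‖ * ‖U 1 1‖) + ‖ρ 1 0‖ * (‖U 0 1‖ * ‖U 1 0‖) := by
  rw [fin_two_conj_apply_zero_one hU]
  refine (norm_add₃_le ..).trans_eq ?_
  simp only [norm_mul, norm_star]

lemma norm_fin_two_conj_apply_one_zero_le (hU : U ∈ unitaryGroup (Fin 2) ℂ)
    (ρ : Matrix (Fin 2) (Fin 2) ℂ) :
    ‖(U * ρ * Uᴴ) 1 0‖ ≤ ‖ρ 0 0 - ρ 1 1‖ * (‖U 0 0‖ * ‖U 1 0‖)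
      + ‖ρ 1 0‖ * (‖U 0 0‖ * ‖U 1 1‖) + ‖ρ 0 1‖ * (‖U 0 1‖ * ‖U 1 0‖) := by
  have h := norm_fin_two_conj_apply_zero_one_le hU ρᴴ
  have h_adjoint : U * ρᴴ * Uᴴ = (U * ρ * Uᴴ)ᴴ := by
    simp [conjTranspose_mul, Matrix.mul_assoc]
  simpa [h_adjoint, ← map_sub] using h

end Matrix.unitaryGroup

lemma l1Coherence_fin_two_conj_le {U : Matrix (Fin 2) (Fin 2) ℂ}
    (hU : U ∈ unitaryGroup (Fin 2) ℂ) (ρ : Matrix (Fin 2) (Fin 2) ℂ) :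
    l1Coherence (U * ρ * Uᴴ) ≤
      ‖ρ 0 0 - ρ 1 1‖ * l1Coherence (U * single 0 0 1 * Uᴴ) + l1Coherence ρ := by
  rw [l1Coherence_fin_two_conj_single_zero, l1Coherence_fin_two, l1Coherence_fin_two ρ]
  have h01 := unitaryGroup.norm_fin_two_conj_apply_zero_one_le hU ρ
  have h10 := unitaryGroup.norm_fin_two_conj_apply_one_zero_le hU ρ
  calc ‖(U * ρ * Uᴴ) 0 1‖ + ‖(U * ρ * Uᴴ) 1 0‖
      ≤ ‖ρ 0 0 - ρ 1 1‖ * (2 * (‖U 0 0‖ * ‖U 1 0‖))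
          + (‖ρ 0 1‖ + ‖ρ 1 0‖) * (‖U 0 0‖ * ‖U 1 1‖ + ‖U 0 1‖ * ‖U 1 0‖) := by
        linarith
    _ ≤ ‖ρ 0 0 - ρ 1 1‖ * (2 * (‖U 0 0‖ * ‖U 1 0‖)) + (‖ρ 0 1‖ + ‖ρ 1 0‖) := by
        gcongr
        exact mul_le_of_le_one_right (by positivity) (unitaryGroup.fin_two_cross_norm_le_one hU)

lemma Matrix.PosSemidef.norm_fin_two_diag_sub_le {ρ : Matrix (Fin 2) (Fin 2) ℂ}
    (hρ : ρ.PosSemidef) : ‖ρ 0 0 - ρ 1 1‖ ≤ ‖ρ.trace‖ := by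
  have h_norm_add : ‖ρ 0 0‖ + ‖ρ 1 1‖ = ‖ρ 0 0 + ρ 1 1‖ := by
    apply Complex.ofReal_injective
    push_cast
    rw [Complex.norm_of_nonneg' hρ.diag_nonneg, Complex.norm_of_nonneg' hρ.diag_nonneg,
      Complex.norm_of_nonneg' (add_nonneg hρ.diag_nonneg hρ.diag_nonneg)]
  rw [trace_fin_two, ← h_norm_add]
  exact norm_sub_le _ _

/-- For every 2×2 unitary `U` and every 2×2 density matrix `ρ`, the
`l1`-coherence gain of `U` on `ρ` is at most the maximum of the coherences of
the images of the two pure incoherent states. -/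
theorem coherence_power_qubit_on_incoherent
    (U : Matrix (Fin 2) (Fin 2) ℂ) (hU : U ∈ Matrix.unitaryGroup (Fin 2) ℂ)
    (ρ : Matrix (Fin 2) (Fin 2) ℂ) (hρ : ρ.PosSemidef) (htr : ρ.trace = 1) :
    l1Coherence (U * ρ * Uᴴ) - l1Coherence ρ ≤
      max (l1Coherence (U * Matrix.single 0 0 1 * Uᴴ))
          (l1Coherence (U * Matrix.single 1 1 1 * Uᴴ)) := by
  have h_diag : ‖ρ 0 0 - ρ 1 1‖ ≤ 1 := by
    simpa [htr] using hρ.norm_fin_two_diag_sub_le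
  have h_gain := l1Coherence_fin_two_conj_le hU ρ
  have h_nonneg : 0 ≤ l1Coherence (U * single 0 0 1 * Uᴴ) := by
    rw [l1Coherence_fin_two_conj_single_zero]
    positivity
  calc l1Coherence (U * ρ * Uᴴ) - l1Coherence ρ
      ≤ ‖ρ 0 0 - ρ 1 1‖ * l1Coherence (U * single 0 0 1 * Uᴴ) := by linarith
    _ ≤ l1Coherence (U * single 0 0 1 * Uᴴ) := mul_le_of_le_one_left h_nonneg h_diag
    _ ≤ _ := le_max_left _ _
end

section
/- For every N×N complex unitary matrix U (N ≥ 1) and every basis index j, the l1-coherence of the image of the pure incoherent state E_{jj} is C_{l1}(U E_{jj} U†) = (∑_{i} |U_{ij}|)² − 1. -/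
open Matrix
open scoped ComplexOrder

theorem Matrix.mul_single_one_mul {l m n o α : Type*} [Fintype m] [Fintype n] [DecidableEq m]
    [DecidableEq n] [Semiring α] (A : Matrix l m α) (B : Matrix n o α) (i : m) (j : n) :
    A * single i j (1 : α) * B = vecMulVec (A.col i) (B.row j) := by
  rw [single_eq_single_vecMulVec_single, mul_vecMulVec, vecMulVec_mul, mulVec_single_one,
    single_one_vecMul]

theorem Matrix.row_conjTranspose {m n α : Type*} [Star α] (A : Matrix m n α) (j : n) :
    Aᴴ.row j = star (A.col j) :=
  rfl

theorem Matrix.sum_norm_sq_col_of_mem_unitaryGroup {n 𝕜 : Type*} [Fintype n] [DecidableEq n]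
    [RCLike 𝕜] {U : Matrix n n 𝕜} (hU : U ∈ unitaryGroup n 𝕜) (j : n) :
    ∑ i, ‖U i j‖ ^ 2 = 1 := by
  have hdiag : (Uᴴ * U) j j = 1 := by
    rw [← star_eq_conjTranspose, Unitary.star_mul_self_of_mem hU, one_apply_eq]
  simp only [mul_apply, conjTranspose_apply, RCLike.star_def, RCLike.conj_mul] at hdiag
  exact_mod_cast hdiag

theorem l1Coherence_eq_sum_norm_sub_sum_norm_diag {n : ℕ} (A : Matrix (Fin n) (Fin n) ℂ) :
    l1Coherence A = ∑ i, ∑ k, ‖A i k‖ - ∑ i, ‖A i i‖ := by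
  rw [l1Coherence, ← Finset.sum_sub_distrib]
  refine Finset.sum_congr rfl fun i _ => ?_
  simp only [ne_eq, ite_not, Finset.sum_ite, Finset.sum_const_zero, zero_add]
  rw [Finset.filter_ne, Finset.sum_erase_eq_sub (Finset.mem_univ i)]

theorem l1Coherence_vecMulVec_star {n : ℕ} (v : Fin n → ℂ) :
    l1Coherence (vecMulVec v (star v)) = (∑ i, ‖v i‖) ^ 2 - ∑ i, ‖v i‖ ^ 2 := by
  simp only [l1Coherence_eq_sum_norm_sub_sum_norm_diag, vecMulVec_apply, Pi.star_apply, norm_mul, norm_star,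
    sq, Finset.sum_mul_sum]

theorem l1Coherence_unitary_on_pure_incoherent_general
    (N : ℕ) (U : Matrix (Fin N) (Fin N) ℂ)
    (hU : U ∈ Matrix.unitaryGroup (Fin N) ℂ) (j : Fin N) :
    l1Coherence (U * Matrix.single j j 1 * Uᴴ) =
      (∑ i, ‖U i j‖) ^ 2 - 1 := by
  rw [mul_single_one_mul, row_conjTranspose, l1Coherence_vecMulVec_star]
  simp only [col_apply, sum_norm_sq_col_of_mem_unitaryGroup hU]

/-- For an `N×N` unitary `U` and a basis index `j`, the `l1`-coherence of the
image of the pure incoherent state `E_jj` is `(∑_i |U i j|)² − 1`. -/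
theorem l1Coherence_unitary_on_pure_incoherent
    (N : ℕ) (hN : 1 ≤ N) (U : Matrix (Fin N) (Fin N) ℂ)
    (hU : U ∈ Matrix.unitaryGroup (Fin N) ℂ) (j : Fin N) :
    l1Coherence (U * Matrix.single j j 1 * Uᴴ) =
      (∑ i, ‖U i j‖) ^ 2 - 1 :=
  l1Coherence_unitary_on_pure_incoherent_general N U hU j
end

section
/- Let N ≥ 1 and let F be the N×N discrete Fourier transform matrix with entries F_{jk} = e^{2πi jk/N}/√N. Then the coherence power of F with respect to the l1-coherence is maximal and equals N − 1: for every N×N density matrix ρ one has C_{l1}(FρF†) − C_{l1}(ρ) ≤ N − 1, and the value N − 1 is attained on a pure incoherent state E_{kk}. -/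
/-!
The Fourier matrix is unitary (its columns are orthogonal by the geometric sum over the powers
of a primitive `N`-th root of unity), so `σ = F ρ Fᴴ` is again a density matrix. Nonnegativity
of the `2 × 2` principal minors of `σ` gives `|σᵢⱼ| ≤ (σᵢᵢ + σⱼⱼ) / 2`, and summing over `i ≠ j`
bounds `C_{l1}(σ)` by `(N - 1) tr σ = N - 1`, while `C_{l1}(ρ) ≥ 0`. Conversely `F Eₖₖ Fᴴ` is the
projector onto the `k`-th column of `F`, all of whose entries have modulus `1 / √N`, so its
`N (N - 1)` off-diagonal entries have modulus `1 / N`, whereas `Eₖₖ` is incoherent.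
-/

open Matrix
open scoped ComplexOrder

open Finset

namespace Matrix.PosSemidef

open RCLike

variable {n 𝕜 : Type*} [RCLike 𝕜] {A : Matrix n n 𝕜}

lemma norm_sq_apply_le (hA : A.PosSemidef) (i j : n) :
    ‖A i j‖ ^ 2 ≤ re (A i i) * re (A j j) := by
  have hdet := (hA.submatrix ![i, j]).det_nonneg
  rw [det_fin_two] at hdet
  simp only [submatrix_apply, Matrix.cons_val_zero, Matrix.cons_val_one] at hdet
  rw [← hA.1.apply j i, ← hA.1.coe_re_apply_self i, ← hA.1.coe_re_apply_self j, star_def,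
    mul_conj, ← ofReal_pow, ← ofReal_mul, ← ofReal_sub, ofReal_nonneg] at hdet
  linarith

lemma norm_apply_le_add_div_two (hA : A.PosSemidef) (i j : n) :
    ‖A i j‖ ≤ (re (A i i) + re (A j j)) / 2 := by
  have hi : 0 ≤ re (A i i) := (nonneg_iff.mp hA.diag_nonneg).1
  have hj : 0 ≤ re (A j j) := (nonneg_iff.mp hA.diag_nonneg).1
  nlinarith [hA.norm_sq_apply_le i j, sq_nonneg (re (A i i) - re (A j j)), norm_nonneg (A i j)]

end Matrix.PosSemidef

lemma Matrix.mul_single_one_mul_conjTranspose_apply {l m α : Type*} [Fintype m] [DecidableEq m]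
    [Semiring α] [StarRing α] (F : Matrix l m α) (k : m) (i j : l) :
    (F * single k k (1 : α) * Fᴴ) i j = F i k * star (F j k) := by
  rw [mul_apply, sum_eq_single k (fun b _ hb ↦ by rw [mul_single_apply_of_ne (hbj := hb), zero_mul])
    (by simp), mul_single_apply_same, mul_one, conjTranspose_apply]

lemma IsPrimitiveRoot.sum_pow_div_pow_pow {K : Type*} [Field K] {ζ : K} {N : ℕ}
    (hζ : IsPrimitiveRoot ζ N) (a b : Fin N) :
    ∑ i : Fin N, (ζ ^ (b : ℕ) / ζ ^ (a : ℕ)) ^ (i : ℕ) = if a = b then (N : K) else 0 := by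
  have hζ0 : ζ ≠ 0 := hζ.ne_zero a.pos.ne'
  rw [Fin.sum_univ_eq_sum_range (fun i ↦ (ζ ^ (b : ℕ) / ζ ^ (a : ℕ)) ^ i)]
  split_ifs with hab
  · simp [hab, hζ0]
  · have hne : ζ ^ (b : ℕ) / ζ ^ (a : ℕ) ≠ 1 := by
      rw [Ne, div_eq_one_iff_eq (pow_ne_zero _ hζ0)]
      exact fun h ↦ hab (Fin.ext (hζ.pow_inj b.isLt a.isLt h).symm)
    rw [geom_sum_eq hne, div_pow, ← pow_mul, ← pow_mul, mul_comm (b : ℕ), mul_comm (a : ℕ),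
      pow_mul, pow_mul, hζ.pow_eq_one]
    simp

lemma conjTranspose_mul_self_eq_one_of_isPrimitiveRoot {N : ℕ} {ζ : ℂ} (hζ : IsPrimitiveRoot ζ N)
    {F : Matrix (Fin N) (Fin N) ℂ} (hF : ∀ j k : Fin N, F j k = ζ ^ ((j : ℕ) * k) / Real.sqrt N) :
    Fᴴ * F = 1 := by
  ext a b
  have hN : (N : ℂ) ≠ 0 := Nat.cast_ne_zero.mpr a.pos.ne'
  have hζ_star : star ζ = ζ⁻¹ := (Complex.inv_eq_conj (hζ.norm'_eq_one a.pos.ne')).symm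
  have hterm (i : Fin N) : Fᴴ a i * F i b = (ζ ^ (b : ℕ) / ζ ^ (a : ℕ)) ^ (i : ℕ) / N := by
    rw [conjTranspose_apply, hF, hF, star_div₀, star_pow, hζ_star, Complex.star_def,
      Complex.conj_ofReal, div_mul_div_comm, ← Complex.ofReal_mul,
      Real.mul_self_sqrt (Nat.cast_nonneg _), Complex.ofReal_natCast, mul_comm (i : ℕ),
      mul_comm (i : ℕ), pow_mul, pow_mul, inv_pow, div_pow]
    ring
  rw [mul_apply, sum_congr rfl fun i _ ↦ hterm i, ← sum_div, hζ.sum_pow_div_pow_pow, one_apply]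
  split_ifs <;> simp [hN]

section L1Coherence

variable {n : ℕ}

lemma l1Coherence_eq_sum_erase (A : Matrix (Fin n) (Fin n) ℂ) :
    l1Coherence A = ∑ i, ∑ j ∈ univ.erase i, ‖A i j‖ := by
  simp only [l1Coherence, ← sum_filter, filter_ne]

lemma l1Coherence_nonneg (A : Matrix (Fin n) (Fin n) ℂ) : 0 ≤ l1Coherence A := by
  rw [l1Coherence_eq_sum_erase]
  positivity

lemma l1Coherence_diagonal (d : Fin n → ℂ) : l1Coherence (diagonal d) = 0 := by
  rw [l1Coherence_eq_sum_erase]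
  refine sum_eq_zero fun i _ ↦ sum_eq_zero fun j hj ↦ ?_
  rw [diagonal_apply_ne _ (ne_of_mem_erase hj).symm, norm_zero]

lemma l1Coherence_of_norm_apply_eq {A : Matrix (Fin n) (Fin n) ℂ} {c : ℝ}
    (hA : ∀ i j, ‖A i j‖ = c) : l1Coherence A = n * (n - 1) * c := by
  simp only [l1Coherence_eq_sum_erase, hA, sum_erase_eq_sub (mem_univ _), sum_const, card_univ,
    Fintype.card_fin, nsmul_eq_mul]
  ring

lemma l1Coherence_mul_single_one_mul_conjTranspose {m : Type*} [Fintype m] [DecidableEq m]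
    {F : Matrix (Fin n) m ℂ} {k : m} {c : ℝ} (hF : ∀ i, ‖F i k‖ = c) :
    l1Coherence (F * single k k (1 : ℂ) * Fᴴ) = n * (n - 1) * c ^ 2 :=
  l1Coherence_of_norm_apply_eq fun i j ↦ by
    rw [mul_single_one_mul_conjTranspose_apply, norm_mul, norm_star, hF, hF, sq]

lemma l1Coherence_le_of_posSemidef {A : Matrix (Fin n) (Fin n) ℂ} (hA : A.PosSemidef) :
    l1Coherence A ≤ (n - 1) * A.trace.re := by
  set d : Fin n → ℝ := fun i ↦ (A i i).re
  calc l1Coherence A = ∑ i, ∑ j ∈ univ.erase i, ‖A i j‖ := l1Coherence_eq_sum_erase A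
    _ ≤ ∑ i, ∑ j ∈ univ.erase i, (d i + d j) / 2 :=
      sum_le_sum fun i _ ↦ sum_le_sum fun j _ ↦ hA.norm_apply_le_add_div_two i j
    _ = (n - 1) * ∑ i, d i := by
      simp only [sum_erase_eq_sub (mem_univ _), ← sum_div, sum_add_distrib, sum_const, card_univ,
        Fintype.card_fin, nsmul_eq_mul, sum_sub_distrib, ← mul_sum]
      ring
    _ = (n - 1) * A.trace.re := by simp [d, trace, Complex.re_sum]

end L1Coherence

/-- The coherence power of the `N`-dimensional discrete Fourier transform with
respect to the `l1`-coherence is maximal and equals `N − 1`: the coherence gain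
on any density matrix is at most `N − 1`, and this value is attained on a pure
incoherent state. -/
theorem coherence_power_fourier
    (N : ℕ) (hN : 1 ≤ N) (F : Matrix (Fin N) (Fin N) ℂ)
    (hF : ∀ j k : Fin N, F j k =
      Complex.exp (2 * Real.pi * Complex.I * (j : ℕ) * (k : ℕ) / N) / Real.sqrt N) :
    (∀ ρ : Matrix (Fin N) (Fin N) ℂ, ρ.PosSemidef → ρ.trace = 1 →
      l1Coherence (F * ρ * Fᴴ) - l1Coherence ρ ≤ (N : ℝ) - 1) ∧
    (∃ k : Fin N,
      l1Coherence (F * Matrix.single k k 1 * Fᴴ) -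
          l1Coherence (Matrix.single k k 1) = (N : ℝ) - 1) := by
  have hN0 : N ≠ 0 := by omega
  have hζ := Complex.isPrimitiveRoot_exp N hN0
  have hF_pow (j k : Fin N) : F j k =
      Complex.exp (2 * Real.pi * Complex.I / N) ^ ((j : ℕ) * k) / Real.sqrt N := by
    rw [hF, ← Complex.exp_nat_mul]
    push_cast
    ring_nf
  have hF_norm (j k : Fin N) : ‖F j k‖ = (Real.sqrt N)⁻¹ := by
    rw [hF_pow, norm_div, norm_pow, hζ.norm'_eq_one hN0, one_pow, Complex.norm_real,
      Real.norm_of_nonneg (Real.sqrt_nonneg _), one_div]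
  have hU := conjTranspose_mul_self_eq_one_of_isPrimitiveRoot hζ hF_pow
  refine ⟨fun ρ hρ hρ_tr ↦ ?_, ⟨⟨0, hN⟩, ?_⟩⟩
  · have h := l1Coherence_le_of_posSemidef (hρ.mul_mul_conjTranspose_same F)
    rw [trace_mul_cycle, hU, one_mul, hρ_tr, Complex.one_re, mul_one] at h
    linarith [l1Coherence_nonneg ρ]
  · rw [l1Coherence_mul_single_one_mul_conjTranspose (hF_norm · _), ← diagonal_single,
      l1Coherence_diagonal, inv_pow, Real.sq_sqrt (Nat.cast_nonneg _)]
    field_simp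
    ring
end

section
/- Let U be an N×N complex unitary matrix (N ≥ 1) and let ρ be an N×N density matrix that is incoherent, i.e. diagonal. Then C_{l1}(UρU†) ≤ max_{i} C_{l1}(U E_{ii} U†), where the maximum is over the pure incoherent states E_{ii}. In particular, over incoherent states the l1-coherence gain of U is maximized by a pure incoherent state. -/
open Matrix
open scoped ComplexOrder

/-!
Conjugating a diagonal `ρ` by `U` gives `∑ i, ρ i i • (U * E_ii * Uᴴ)`. The `l1`-coherence is
a seminorm, so it is convex, and for a density matrix the weights `ρ i i` are nonnegative with
sum `1`; a convex combination never exceeds the largest of its terms.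
-/

open Finset

namespace Finset

theorem sum_mul_le_sup'_of_sum_eq_one {ι : Type*} {s : Finset ι} (hs : s.Nonempty)
    {w : ι → ℝ} (f : ι → ℝ) (hw : ∀ i ∈ s, 0 ≤ w i) (hw1 : ∑ i ∈ s, w i = 1) :
    ∑ i ∈ s, w i * f i ≤ s.sup' hs f :=
  calc ∑ i ∈ s, w i * f i ≤ ∑ i ∈ s, w i * s.sup' hs f :=
        sum_le_sum fun i hi => mul_le_mul_of_nonneg_left (le_sup' f hi) (hw i hi)
    _ = s.sup' hs f := by rw [← sum_mul, hw1, one_mul]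

end Finset

namespace Matrix

theorem IsDiag.mul_mul_eq_sum_smul {m n α : Type*} [Fintype n] [DecidableEq n] [CommSemiring α]
    {A : Matrix n n α} (hA : A.IsDiag) (U : Matrix m n α) (V : Matrix n m α) :
    U * A * V = ∑ i, A i i • (U * single i i (1 : α) * V) := by
  conv_lhs => rw [← hA.diagonal_diag, ← sum_single_eq_diagonal, Matrix.mul_sum, Matrix.sum_mul]
  refine sum_congr rfl fun i _ => ?_
  have hsingle : single i i (A i i) = A i i • single i i (1 : α) := by
    rw [smul_single, smul_eq_mul, mul_one]
  rw [diag_apply, hsingle, Matrix.mul_smul, Matrix.smul_mul]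

theorem PosSemidef.sum_norm_diag {n : Type*} [Fintype n] {A : Matrix n n ℂ}
    (hA : A.PosSemidef) : ∑ i, ‖A i i‖ = A.trace.re := by
  rw [trace, Complex.re_sum]
  exact sum_congr rfl fun i _ => (Complex.re_eq_norm.2 hA.diag_nonneg).symm

end Matrix

section l1Coherence

variable {n : ℕ}

theorem l1Coherence_zero : l1Coherence (0 : Matrix (Fin n) (Fin n) ℂ) = 0 := by
  simp [l1Coherence]

theorem l1Coherence_add_le (A B : Matrix (Fin n) (Fin n) ℂ) :
    l1Coherence (A + B) ≤ l1Coherence A + l1Coherence B := by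
  simp only [l1Coherence, ← sum_add_distrib]
  gcongr with i _ j _
  split_ifs
  · exact norm_add_le _ _
  · simp

theorem l1Coherence_smul (c : ℂ) (A : Matrix (Fin n) (Fin n) ℂ) :
    l1Coherence (c • A) = ‖c‖ * l1Coherence A := by
  simp only [l1Coherence, mul_sum, Matrix.smul_apply, smul_eq_mul, norm_mul, mul_ite, mul_zero]

theorem l1Coherence_sum_smul_le {ι : Type*} (s : Finset ι) (c : ι → ℂ)
    (A : ι → Matrix (Fin n) (Fin n) ℂ) :
    l1Coherence (∑ i ∈ s, c i • A i) ≤ ∑ i ∈ s, ‖c i‖ * l1Coherence (A i) := by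
  simp_rw [← l1Coherence_smul]
  exact le_sum_of_subadditive _ l1Coherence_zero.le l1Coherence_add_le s _

end l1Coherence

theorem l1Coherence_incoherent_le_max_pure_general
    (N : ℕ) (hN : 1 ≤ N) (U : Matrix (Fin N) (Fin N) ℂ)
    (ρ : Matrix (Fin N) (Fin N) ℂ) (hρ : ρ.PosSemidef) (htr : ρ.trace = 1)
    (hdiag : ∀ i j : Fin N, i ≠ j → ρ i j = 0) :
    l1Coherence (U * ρ * Uᴴ) ≤
      Finset.univ.sup' ⟨⟨0, hN⟩, Finset.mem_univ _⟩
        (fun i : Fin N => l1Coherence (U * Matrix.single i i 1 * Uᴴ)) := by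
  have hweights : ∑ i, ‖ρ i i‖ = 1 := by rw [hρ.sum_norm_diag, htr, Complex.one_re]
  calc l1Coherence (U * ρ * Uᴴ)
      = l1Coherence (∑ i, ρ i i • (U * single i i 1 * Uᴴ)) := by
        rw [IsDiag.mul_mul_eq_sum_smul hdiag]
    _ ≤ ∑ i, ‖ρ i i‖ * l1Coherence (U * single i i 1 * Uᴴ) := l1Coherence_sum_smul_le _ _ _
    _ ≤ _ := sum_mul_le_sup'_of_sum_eq_one _ _ (fun _ _ => norm_nonneg _) hweights

/-- For a unitary `U` and an incoherent (diagonal) density matrix `ρ`, the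
`l1`-coherence of `U * ρ * Uᴴ` is at most the maximum over `i` of the
`l1`-coherence of the image of the pure incoherent state `E_ii`. -/
theorem l1Coherence_incoherent_le_max_pure
    (N : ℕ) (hN : 1 ≤ N) (U : Matrix (Fin N) (Fin N) ℂ)
    (hU : U ∈ Matrix.unitaryGroup (Fin N) ℂ)
    (ρ : Matrix (Fin N) (Fin N) ℂ) (hρ : ρ.PosSemidef) (htr : ρ.trace = 1)
    (hdiag : ∀ i j : Fin N, i ≠ j → ρ i j = 0) :
    l1Coherence (U * ρ * Uᴴ) ≤
      Finset.univ.sup' ⟨⟨0, hN⟩, Finset.mem_univ _⟩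
        (fun i : Fin N => l1Coherence (U * Matrix.single i i 1 * Uᴴ)) :=
  l1Coherence_incoherent_le_max_pure_general N hN U ρ hρ htr hdiag
end

section
/- Let U be the 3×3 real unitary matrix R_x(π/8) with rows (1,0,0), (0, cos(π/8), −sin(π/8)), (0, sin(π/8), cos(π/8)). Let q₃ = 12533/100000, q₂ = √(1 − q₃²), let φ = q₂e₂ + q₃e₃ ∈ ℝ³ be the coherent pure input state, and let v = Uφ be its image. Then the relative-entropy coherence gain of U on φ, which for pure states equals the Shannon entropy of the output diagonal minus the Shannon entropy of the input diagonal, strictly exceeds the largest gain achievable on a pure incoherent state: −∑_j v_j² ln(v_j²) − ( −q₂² ln(q₂²) − q₃² ln(q₃²) ) > max_{i∈{1,2,3}} ( −∑_j U_{ji}² ln(U_{ji}²) ), with the convention 0·ln 0 = 0. Hence the coherence power of U with respect to the relative entropy of coherence is not attained on incoherent states. -/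
/-!
For a pure state the coherence is the Shannon entropy of the squared amplitudes. All vectors
involved have vanishing first coordinate and unit norm, so every entropy is a binary entropy `h`:
the gain on `φ` is `h(w²) - h(q₃²)` with `w = sin(π/8) q₂ + cos(π/8) q₃`, while the gain on each
incoherent basis state is `0` or `h(sin²(π/8))`. Since `h` increases on `[0, 1/2]`, it suffices to
compare `h` at rationals bracketing `q₃² ≈ 0.0157`, `sin²(π/8) ≈ 0.1464` and `w² ≈ 0.2455`, where
the logarithms are bounded by `log x ≤ n (x^(1/n) - 1)` and its reverse with `n = 32`.
-/

open Matrix Real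

namespace Real

lemma log_le_mul_sub_one_of_le_pow {x y : ℝ} (n : ℕ) (hx : 0 < x) (hy : 0 < y)
    (h : x ≤ y ^ n) : log x ≤ n * (y - 1) :=
  calc log x ≤ log (y ^ n) := log_le_log hx h
    _ = n * log y := Real.log_pow y n
    _ ≤ n * (y - 1) := by gcongr; exact log_le_sub_one_of_pos hy

lemma mul_one_sub_inv_le_log_of_pow_le {x y : ℝ} (n : ℕ) (hy : 0 < y) (h : y ^ n ≤ x) :
    n * (1 - y⁻¹) ≤ log x :=
  calc n * (1 - y⁻¹) ≤ n * log y := by gcongr; exact one_sub_inv_le_log_of_pos hy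
    _ = log (y ^ n) := (Real.log_pow y n).symm
    _ ≤ log x := log_le_log (pow_pos hy n) h

lemma binEntropy_le_of_pow_le {p y z : ℝ} (n : ℕ) (hp₀ : 0 ≤ p) (hp₁ : p ≤ 1) (hy : 0 < y)
    (hz : 0 < z) (hyp : y ^ n ≤ p) (hzp : z ^ n ≤ 1 - p) :
    binEntropy p ≤ n * (p * (y⁻¹ - 1) + (1 - p) * (z⁻¹ - 1)) := by
  have h₁ := mul_le_mul_of_nonneg_left (mul_one_sub_inv_le_log_of_pow_le n hy hyp) hp₀
  have h₂ := mul_le_mul_of_nonneg_left (mul_one_sub_inv_le_log_of_pow_le n hz hzp)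
    (sub_nonneg.2 hp₁)
  rw [binEntropy, log_inv, log_inv]
  linarith

lemma le_binEntropy_of_le_pow {p y z : ℝ} (n : ℕ) (hp₀ : 0 < p) (hp₁ : p < 1) (hy : 0 < y)
    (hz : 0 < z) (hyp : p ≤ y ^ n) (hzp : 1 - p ≤ z ^ n) :
    n * (p * (1 - y) + (1 - p) * (1 - z)) ≤ binEntropy p := by
  have h₁ := mul_le_mul_of_nonneg_left (log_le_mul_sub_one_of_le_pow n hp₀ hy hyp) hp₀.le
  have h₂ := mul_le_mul_of_nonneg_left (log_le_mul_sub_one_of_le_pow n (sub_pos.2 hp₁) hz hzp)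
    (sub_pos.2 hp₁).le
  rw [binEntropy, log_inv, log_inv]
  linarith

lemma binEntropy_sq_of_sq_add_sq {a b : ℝ} (h : a ^ 2 + b ^ 2 = 1) :
    binEntropy (b ^ 2) = -(a ^ 2 * log (a ^ 2)) - b ^ 2 * log (b ^ 2) := by
  rw [binEntropy_eq_negMulLog_add_negMulLog_one_sub, ← h, add_sub_cancel_right, negMulLog,
    negMulLog]
  ring

lemma sqrt_two_mem_Icc : √2 ∈ Set.Icc (7 / 5 : ℝ) (71 / 50) := by
  have h := sq_sqrt (zero_le_two : (0 : ℝ) ≤ 2)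
  constructor <;> nlinarith [sqrt_nonneg 2]

lemma sin_sq_pi_div_eight : sin (π / 8) ^ 2 = (2 - √2) / 4 := by
  rw [sin_pi_div_eight, div_pow, sq_sqrt (by linarith [sqrt_two_mem_Icc.2])]
  ring

lemma cos_sq_pi_div_eight : cos (π / 8) ^ 2 = (2 + √2) / 4 := by
  rw [cos_pi_div_eight, div_pow, sq_sqrt (by positivity)]
  ring

end Real

/-- The relative entropy of coherence of the real pure state `|φ⟩⟨φ|`. -/
noncomputable def relEntCoherence {n : ℕ} (φ : Fin n → ℝ) : ℝ := -∑ j, φ j ^ 2 * log (φ j ^ 2)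

lemma relEntCoherence_of_head_eq_zero {φ : Fin 3 → ℝ} (h₀ : φ 0 = 0)
    (h : φ 1 ^ 2 + φ 2 ^ 2 = 1) : relEntCoherence φ = binEntropy (φ 2 ^ 2) := by
  rw [binEntropy_sq_of_sq_add_sq h, relEntCoherence, Fin.sum_univ_three, h₀]
  simp only [ne_eq, OfNat.ofNat_ne_zero, not_false_eq_true, zero_pow, log_zero, mul_zero]
  ring

/-- The rotation `R_x(θ)` about the first coordinate axis. -/
noncomputable def rotX (θ : ℝ) : Matrix (Fin 3) (Fin 3) ℝ :=
  !![1, 0, 0; 0, cos θ, -sin θ; 0, sin θ, cos θ]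

lemma relEntCoherence_rotX_col_zero (θ : ℝ) : relEntCoherence (fun j ↦ rotX θ j 0) = 0 := by
  simp [relEntCoherence, rotX, Fin.sum_univ_three]

lemma relEntCoherence_rotX_col_one (θ : ℝ) :
    relEntCoherence (fun j ↦ rotX θ j 1) = binEntropy (sin θ ^ 2) :=
  relEntCoherence_of_head_eq_zero rfl (cos_sq_add_sin_sq θ)

lemma relEntCoherence_rotX_col_two (θ : ℝ) :
    relEntCoherence (fun j ↦ rotX θ j 2) = binEntropy (sin θ ^ 2) := by
  rw [relEntCoherence_of_head_eq_zero rfl (by simp [rotX, sin_sq_add_cos_sq θ]),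
    ← binEntropy_one_sub]
  simp [rotX, cos_sq']

lemma max_relEntCoherence_rotX_col (θ : ℝ) :
    max (relEntCoherence (fun j ↦ rotX θ j 0))
      (max (relEntCoherence (fun j ↦ rotX θ j 1)) (relEntCoherence (fun j ↦ rotX θ j 2))) =
      binEntropy (sin θ ^ 2) := by
  rw [relEntCoherence_rotX_col_zero, relEntCoherence_rotX_col_one, relEntCoherence_rotX_col_two,
    max_self, max_eq_right (binEntropy_nonneg (sq_nonneg _) (sin_sq_le_one _))]

lemma rotX_mulVec (θ a b : ℝ) :
    rotX θ *ᵥ ![0, a, b] = ![0, cos θ * a - sin θ * b, sin θ * a + cos θ * b] := by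
  ext i
  fin_cases i <;> simp [rotX, mulVec, dotProduct, Fin.sum_univ_three]; ring

lemma relEntCoherence_rotX_mulVec (θ a b : ℝ) (h : a ^ 2 + b ^ 2 = 1) :
    relEntCoherence (rotX θ *ᵥ ![0, a, b]) = binEntropy ((sin θ * a + cos θ * b) ^ 2) := by
  rw [rotX_mulVec]
  refine relEntCoherence_of_head_eq_zero rfl ?_
  simp only [cons_val_one, cons_val_two, cons_val_zero, head_cons, tail_cons]
  linear_combination h + (a ^ 2 + b ^ 2) * sin_sq_add_cos_sq θ

lemma sin_pi_div_eight_mul_add_sq_mem_Icc {a b : ℝ} (ha : 99 / 100 ≤ a) (ha₁ : a ≤ 1)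
    (hb : b = 12533 / 100000) :
    (sin (π / 8) * a + cos (π / 8) * b) ^ 2 ∈ Set.Icc (6 / 25 : ℝ) 2⁻¹ := by
  obtain ⟨h₁, h₂⟩ := sqrt_two_mem_Icc
  have hs := sin_sq_pi_div_eight
  have hc := cos_sq_pi_div_eight
  have hs₀ : 0 ≤ sin (π / 8) :=
    sin_nonneg_of_nonneg_of_le_pi (by positivity) (by linarith [pi_pos])
  have hc₀ : 0 ≤ cos (π / 8) :=
    cos_nonneg_of_neg_pi_div_two_le_of_le (by linarith [pi_pos]) (by linarith [pi_pos])
  have hs_lb : 19 / 50 ≤ sin (π / 8) := by nlinarith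
  have hs_ub : sin (π / 8) ≤ 2 / 5 := by nlinarith
  have hc_lb : 23 / 25 ≤ cos (π / 8) := by nlinarith
  have hc_ub : cos (π / 8) ≤ 1 := cos_le_one _
  subst hb
  constructor <;> nlinarith [mul_le_mul hs_lb ha (by norm_num) hs₀,
    mul_le_mul hs_ub ha₁ (by linarith) (by norm_num)]

lemma binEntropy_gap : binEntropy (2 / 125) + binEntropy (3 / 20) < binEntropy (6 / 25) := by
  -- `y` and `z` are rational approximations of the 32nd roots of `p` and `1 - p`.
  have h_in := binEntropy_le_of_pow_le (p := 2 / 125) (y := 8787 / 10000) (z := 4997 / 5000) 32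
    (by norm_num) (by norm_num) (by norm_num) (by norm_num) (by norm_num) (by norm_num)
  have h_rot := binEntropy_le_of_pow_le (p := 3 / 20) (y := 589 / 625) (z := 9949 / 10000) 32
    (by norm_num) (by norm_num) (by norm_num) (by norm_num) (by norm_num) (by norm_num)
  have h_out := le_binEntropy_of_le_pow (p := 6 / 25) (y := 2391 / 2500) (z := 1983 / 2000) 32
    (by norm_num) (by norm_num) (by norm_num) (by norm_num) (by norm_num) (by norm_num)
  norm_num at h_in h_rot h_out
  linarith

/-- For the rotation `R_x(π/8)`, the relative-entropy coherence gain on the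
coherent pure state `φ = q₂ e₂ + q₃ e₃` (with `q₃ = 12533/100000`,
`q₂ = √(1 − q₃²)`), namely the Shannon entropy of the output diagonal minus
that of the input diagonal, strictly exceeds the largest gain achievable on a
pure incoherent state, i.e. the largest Shannon entropy of a column of squared
entries of `U`. (`Real.log 0 = 0` encodes the convention `0·ln 0 = 0`.)
Hence the coherence power of `R_x(π/8)` with respect to the relative entropy of
coherence is not attained on incoherent states. -/
theorem rotation_pi_div_eight_rel_ent_coherent_gain
    (U : Matrix (Fin 3) (Fin 3) ℝ)
    (hU : U = !![1, 0, 0;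
                 0, Real.cos (Real.pi / 8), -Real.sin (Real.pi / 8);
                 0, Real.sin (Real.pi / 8), Real.cos (Real.pi / 8)])
    (q₂ q₃ : ℝ) (hq₃ : q₃ = 12533 / 100000) (hq₂ : q₂ = Real.sqrt (1 - q₃ ^ 2))
    (φ : Fin 3 → ℝ) (hφ : φ = ![0, q₂, q₃])
    (v : Fin 3 → ℝ) (hv : v = U.mulVec φ)
    (H : Fin 3 → ℝ)
    (hH : ∀ i : Fin 3, H i = -∑ j, (U j i) ^ 2 * Real.log ((U j i) ^ 2)) :
    (-∑ j, (v j) ^ 2 * Real.log ((v j) ^ 2)) -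
        (-(q₂ ^ 2 * Real.log (q₂ ^ 2)) - q₃ ^ 2 * Real.log (q₃ ^ 2)) >
      max (H 0) (max (H 1) (H 2)) := by
  change U = rotX (π / 8) at hU
  subst hU hφ hv
  have hq₃_sq : q₃ ^ 2 = 157076089 / 10 ^ 10 := by rw [hq₃]; norm_num
  have hq : q₂ ^ 2 + q₃ ^ 2 = 1 := by
    rw [hq₂, sq_sqrt (by rw [hq₃_sq]; norm_num)]; ring
  have hq₂_mem : q₂ ∈ Set.Icc (99 / 100 : ℝ) 1 := by
    constructor <;> nlinarith [sqrt_nonneg (1 - q₃ ^ 2)]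
  have h_max := max_relEntCoherence_rotX_col (π / 8)
  have h_out := relEntCoherence_rotX_mulVec (π / 8) q₂ q₃ hq
  simp only [relEntCoherence, ← hH] at h_max h_out
  rw [h_max, h_out, ← binEntropy_sq_of_sq_add_sq hq, gt_iff_lt]
  have h_mono := binEntropy_strictMonoOn.monotoneOn
  have h_in : binEntropy (q₃ ^ 2) ≤ binEntropy (2 / 125) :=
    h_mono ⟨sq_nonneg _, by rw [hq₃_sq]; norm_num⟩ ⟨by norm_num, by norm_num⟩
      (by rw [hq₃_sq]; norm_num)
  have h_rot : binEntropy (sin (π / 8) ^ 2) ≤ binEntropy (3 / 20) := by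
    have := sqrt_two_mem_Icc.1
    refine h_mono ⟨sq_nonneg _, ?_⟩ ⟨by norm_num, by norm_num⟩ ?_ <;>
      rw [sin_sq_pi_div_eight] <;> linarith
  have h_gain : binEntropy (6 / 25) ≤ binEntropy ((sin (π / 8) * q₂ + cos (π / 8) * q₃) ^ 2) := by
    have h := sin_pi_div_eight_mul_add_sq_mem_Icc hq₂_mem.1 hq₂_mem.2 hq₃
    exact h_mono ⟨by norm_num, by norm_num⟩ ⟨by linarith [h.1], h.2⟩ h.1
  linarith [binEntropy_gap]
end
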